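/- arXiv:1103.0889 — 2 statements merged into one kernel-verified Lean document; each statement's English description precedes it below -/
import Mathlib

section
/- Let X₀, X₁, … be i.i.d. random variables with common distribution F, and let M_m = max(X₀, …, X_{m-1}). If a_m > 0 and b_m are sequences such that m(1 - F(x/a_m + b_m)) → τ(x) for some function τ at a point x, then P(a_m(M_m - b_m) ≤ x) → e^{-τ(x)} as m → ∞. -/
/-!
With `u m = x / a m + b m`, the event `a m * (M m - b m) ≤ x` is `M m ≤ u m`, which by
independence and identical distribution has probability `F (u m) ^ m = (1 + (F (u m) - 1)) ^ m`;
since `m * (F (u m) - 1) → -τ`, this tends to `exp (-τ)`.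
-/

open MeasureTheory Filter ProbabilityTheory

lemma measure_iSup_le_eq_pow {Ω : Type*} [MeasurableSpace Ω] {μ : Measure Ω}
    {X : ℕ → Ω → ℝ} (hmeas : ∀ i, Measurable (X i))
    (hindep : iIndepFun X μ) (hident : ∀ i, μ.map (X i) = μ.map (X 0))
    (m : ℕ) [NeZero m] (u : ℝ) :
    μ {ω | ⨆ i : Fin m, X i ω ≤ u} = μ {ω | X 0 ω ≤ u} ^ m := by
  have hset : {ω | ⨆ i : Fin m, X i ω ≤ u} = ⋂ i ∈ Finset.range m, X i ⁻¹' Set.Iic u := by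
    ext ω
    simp only [Set.mem_ofPred_eq, ciSup_le_iff (Set.finite_range _).bddAbove, Set.mem_iInter,
      Finset.mem_range, Set.mem_preimage, Set.mem_Iic]
    exact ⟨fun h i hi => h ⟨i, hi⟩, fun h i => h i i.2⟩
  have hsame : ∀ i, μ (X i ⁻¹' Set.Iic u) = μ {ω | X 0 ω ≤ u} := fun i => by
    rw [← Measure.map_apply (hmeas i) measurableSet_Iic, hident i,
      Measure.map_apply (hmeas 0) measurableSet_Iic]
    rfl
  rw [hset, hindep.measure_inter_preimage_eq_mul _ fun _ _ => measurableSet_Iic,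
    Finset.prod_congr rfl fun i _ => hsame i, Finset.prod_const, Finset.card_range]

theorem stmt7_general {Ωs : Type*} [MeasurableSpace Ωs] (μ : Measure Ωs)
    (X : ℕ → Ωs → ℝ) (hmeas : ∀ i, Measurable (X i))
    (hindep : iIndepFun X μ)
    (hident : ∀ i, μ.map (X i) = μ.map (X 0))
    (F : ℝ → ℝ) (hF : ∀ u, F u = (μ {ω | X 0 ω ≤ u}).toReal)
    (a b : ℕ → ℝ) (ha : ∀ m, 0 < a m) (x τ : ℝ)
    (hτ : Tendsto (fun m : ℕ => (m : ℝ) * (1 - F (x / a m + b m))) atTop (nhds τ)) :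
    Tendsto (fun m : ℕ =>
        (μ {ω | a m * ((⨆ i : Fin m, X i ω) - b m) ≤ x}).toReal)
      atTop (nhds (Real.exp (-τ))) := by
  have hpow : Tendsto (fun m : ℕ => F (x / a m + b m) ^ m) atTop (nhds (Real.exp (-τ))) := by
    have h := Real.tendsto_one_add_pow_exp_of_tendsto
      (g := fun m => F (x / a m + b m) - 1) (t := -τ) (hτ.neg.congr fun m => by ring)
    simpa using h
  refine hpow.congr' ?_
  filter_upwards [eventually_ge_atTop 1] with m hm
  have : NeZero m := ⟨by omega⟩
  have hset : {ω | a m * ((⨆ i : Fin m, X i ω) - b m) ≤ x}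
      = {ω | ⨆ i : Fin m, X i ω ≤ x / a m + b m} := by
    ext ω
    simp only [Set.mem_ofPred_eq]
    rw [mul_comm, ← le_div_iff₀ (ha m), sub_le_iff_le_add]
  rw [hset, measure_iSup_le_eq_pow hmeas hindep hident, ENNReal.toReal_pow, hF]

/-- For i.i.d. X₀, X₁, … with cdf F, M_m = max(X₀,…,X_{m-1}): if
    m (1 - F(x/a_m + b_m)) → τ at a point x (with a_m > 0), then
    P(a_m (M_m - b_m) ≤ x) → e^{-τ}. -/
theorem stmt7 {Ωs : Type*} [MeasurableSpace Ωs] (μ : Measure Ωs) [IsProbabilityMeasure μ]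
    (X : ℕ → Ωs → ℝ) (hmeas : ∀ i, Measurable (X i))
    (hindep : iIndepFun X μ)
    (hident : ∀ i, μ.map (X i) = μ.map (X 0))
    (F : ℝ → ℝ) (hF : ∀ u, F u = (μ {ω | X 0 ω ≤ u}).toReal)
    (a b : ℕ → ℝ) (ha : ∀ m, 0 < a m) (x τ : ℝ)
    (hτ : Tendsto (fun m : ℕ => (m : ℝ) * (1 - F (x / a m + b m))) atTop (nhds τ)) :
    Tendsto (fun m : ℕ =>
        (μ {ω | a m * ((⨆ i : Fin m, X i ω) - b m) ≤ x}).toReal)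
      atTop (nhds (Real.exp (-τ))) :=
  stmt7_general μ X hmeas hindep hident F hF a b ha x τ hτ
end

section
/- The measure ν on [0,1] with density ρ(x) = 1/(π√(x(1-x))) is invariant under the logistic map f(x) = 4x(1-x): for every Borel set A ⊆ [0,1], ν(f⁻¹(A)) = ν(A). -/
/-!
The map `q θ = (1 - cos (π θ)) / 2` is the quantile function of the arcsine law: it maps
`(0, 1)` increasingly onto `(0, 1)` with `q' θ = (π / 2) sin (π θ) = 1 / ρ (q θ)`, so `ν` is the
image of Lebesgue measure on `(0, 1)` under `q`. Moreover `q` conjugates the logistic map to the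
doubling `θ ↦ 2θ`, and `q (2 - θ) = q θ`. Hence `q⁻¹ (f⁻¹ A)` is the preimage under doubling of
the set `B = q⁻¹ A`, which is symmetric about `1`, and doubling preserves Lebesgue measure on such
sets: `(0, 1)` is covered twice, once through `B ∩ (0, 1)` and once through its mirror image
`B ∩ (1, 2)`, each with Jacobian `1/2`.
-/

open MeasureTheory Set Real

noncomputable def arcsineQuantile (θ : ℝ) : ℝ := (1 - cos (π * θ)) / 2

noncomputable def arcsineMeasure : Measure ℝ :=
  (volume.restrict (Icc (0:ℝ) 1)).withDensity
    (fun x => ENNReal.ofReal (1 / (π * √(x * (1 - x)))))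

namespace arcsineQuantile

lemma continuous : Continuous arcsineQuantile := by
  unfold arcsineQuantile; fun_prop

lemma hasDerivAt (θ : ℝ) : HasDerivAt arcsineQuantile (π / 2 * sin (π * θ)) θ :=
  ((((hasDerivAt_id θ).const_mul π).cos.const_sub 1).div_const 2).congr_deriv
    (by simp only [id]; ring)

lemma strictMonoOn : StrictMonoOn arcsineQuantile (Icc 0 1) := by
  intro a ha b hb hab
  have hmem : ∀ x ∈ Icc (0:ℝ) 1, π * x ∈ Icc 0 π := fun x hx =>
    ⟨by nlinarith [pi_pos, hx.1], by nlinarith [pi_pos, hx.2]⟩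
  have := strictAntiOn_cos (hmem a ha) (hmem b hb) (by nlinarith [pi_pos])
  unfold arcsineQuantile
  linarith

lemma image_Ioo : arcsineQuantile '' Ioo 0 1 = Ioo 0 1 := by
  rw [continuous.continuousOn.image_Ioo_of_strictMonoOn zero_le_one strictMonoOn]
  norm_num [arcsineQuantile]

lemma mul_one_sub (θ : ℝ) :
    arcsineQuantile θ * (1 - arcsineQuantile θ) = (sin (π * θ) / 2) ^ 2 := by
  unfold arcsineQuantile
  linear_combination (-1 / 4 : ℝ) * sin_sq_add_cos_sq (π * θ)

lemma logistic_comp :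
    (fun x => 4 * x * (1 - x)) ∘ arcsineQuantile = arcsineQuantile ∘ (2 * ·) := by
  funext θ
  rw [Function.comp_apply, mul_assoc, mul_one_sub, Function.comp_apply, arcsineQuantile,
    mul_left_comm, cos_two_mul]
  linear_combination sin_sq_add_cos_sq (π * θ)

lemma comp_two_sub : arcsineQuantile ∘ (2 - ·) = arcsineQuantile := by
  funext θ
  simp only [Function.comp_apply, arcsineQuantile, mul_sub, ← cos_two_pi_sub (π * θ),
    mul_comm π 2]

lemma abs_deriv_mul_density {θ : ℝ} (hθ : θ ∈ Ioo 0 1) :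
    |π / 2 * sin (π * θ)| * (1 / (π * √(arcsineQuantile θ * (1 - arcsineQuantile θ)))) = 1 := by
  have hsin : 0 < sin (π * θ) :=
    sin_pos_of_pos_of_lt_pi (by nlinarith [pi_pos, hθ.1]) (by nlinarith [pi_pos, hθ.2])
  rw [mul_one_sub, sqrt_sq (by positivity), abs_of_pos (by positivity)]
  field_simp

end arcsineQuantile

lemma arcsineMeasure_apply {A : Set ℝ} (hA : MeasurableSet A) :
    arcsineMeasure A = volume (arcsineQuantile ⁻¹' A ∩ Ioo 0 1) := by
  set s := arcsineQuantile ⁻¹' A ∩ Ioo 0 1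
  have hs : MeasurableSet s :=
    (arcsineQuantile.continuous.measurable hA).inter measurableSet_Ioo
  have himage : arcsineQuantile '' s = A ∩ Ioo 0 1 := by
    rw [image_preimage_inter, arcsineQuantile.image_Ioo]
  have hinj : InjOn arcsineQuantile s :=
    arcsineQuantile.strictMonoOn.injOn.mono (inter_subset_right.trans Ioo_subset_Icc_self)
  have hIcc : (A ∩ Icc 0 1 : Set ℝ) =ᵐ[volume] (A ∩ Ioo 0 1 : Set ℝ) :=
    ae_eq_set_inter (.refl _ _) Ioo_ae_eq_Icc.symm
  rw [arcsineMeasure, withDensity_apply _ hA, Measure.restrict_restrict hA,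
    Measure.restrict_congr_set hIcc, ← himage,
    lintegral_image_eq_lintegral_abs_deriv_mul hs
      (fun θ _ => (arcsineQuantile.hasDerivAt θ).hasDerivWithinAt) hinj]
  rw [setLIntegral_congr_fun hs (g := fun _ => 1) fun θ hθ => by
    rw [← ENNReal.ofReal_mul (abs_nonneg _), arcsineQuantile.abs_deriv_mul_density hθ.2,
      ENNReal.ofReal_one], setLIntegral_one]

lemma volume_preimage_two_mul_inter_Ioo {B : Set ℝ} (hB : MeasurableSet B)
    (hsymm : (2 - ·) ⁻¹' B = B) :
    volume ((2 * ·) ⁻¹' B ∩ Ioo 0 1) = volume (B ∩ Ioo 0 1) := by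
  have hmirror : volume (B ∩ Ioo 1 2) = volume (B ∩ Ioo 0 1) := by
    rw [← (Measure.measurePreserving_sub_left volume 2).measure_preimage
      (hB.inter measurableSet_Ioo).nullMeasurableSet, preimage_inter, hsymm,
      preimage_const_sub_Ioo]
    norm_num
  have hsplit : volume (B ∩ Ioo 0 2) = volume (B ∩ Ioo 0 1) + volume (B ∩ Ioo 1 2) := by
    have hdisj : Disjoint (B ∩ Ioc 0 1) (B ∩ Ioo 1 2) :=
      (Ioc_disjoint_Ioi_same.mono_right Ioo_subset_Ioi_self).mono inter_subset_right
        inter_subset_right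
    rw [← Ioc_union_Ioo_eq_Ioo zero_le_one one_lt_two, inter_union_distrib_left,
      measure_union hdisj (hB.inter measurableSet_Ioo)]
    exact congrArg (· + _) (measure_congr (ae_eq_set_inter (.refl _ _) Ioo_ae_eq_Ioc.symm))
  calc volume ((2 * ·) ⁻¹' B ∩ Ioo 0 1)
      = volume ((2 * ·) ⁻¹' (B ∩ Ioo 0 2)) := by
        rw [preimage_inter, preimage_const_mul_Ioo₀ _ _ two_pos]; norm_num
    _ = ENNReal.ofReal |2⁻¹| * volume (B ∩ Ioo 0 2) := volume_preimage_mul_left two_ne_zero _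
    _ = volume (B ∩ Ioo 0 1) := by
        rw [hsplit, hmirror, ← two_mul, ← mul_assoc]
        norm_num [ENNReal.ofReal_div_of_pos, ENNReal.inv_mul_cancel]

/-- The measure on [0,1] with density ρ(x) = 1/(π√(x(1-x))) is invariant under
    the logistic map f(x) = 4x(1-x): ν(f⁻¹ A) = ν A for every Borel set A. -/
theorem stmt11 :
    ∀ A : Set ℝ, MeasurableSet A →
      ((volume.restrict (Icc (0:ℝ) 1)).withDensity
          (fun x => ENNReal.ofReal (1 / (π * Real.sqrt (x * (1 - x))))))
        ((fun x : ℝ => 4 * x * (1 - x)) ⁻¹' A)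
      = ((volume.restrict (Icc (0:ℝ) 1)).withDensity
          (fun x => ENNReal.ofReal (1 / (π * Real.sqrt (x * (1 - x)))))) A := by
  intro A hA
  have hf : Measurable fun x : ℝ => 4 * x * (1 - x) := by fun_prop
  have hB : MeasurableSet (arcsineQuantile ⁻¹' A) := arcsineQuantile.continuous.measurable hA
  change arcsineMeasure _ = arcsineMeasure A
  rw [arcsineMeasure_apply (hf hA), arcsineMeasure_apply hA, ← preimage_comp,
    arcsineQuantile.logistic_comp, preimage_comp]
  refine volume_preimage_two_mul_inter_Ioo hB ?_
  rw [← preimage_comp, arcsineQuantile.comp_two_sub]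
end
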